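/- arXiv:1309.6003 — 2 statements merged into one kernel-verified Lean document; each statement's English description precedes it below -/
import Mathlib

section
/- For Hermitian matrices A_1, ..., A_k and B_1, ..., B_k (on spaces C^{d_1}, ..., C^{d_k}), the inner product ⟨A, B⟩_{2(1)} = tr(AB) + (tr A)(tr B) tensorizes: ⟨A_1 ⊗ ... ⊗ A_k, B_1 ⊗ ... ⊗ B_k⟩_{2(k)} = Π_{i=1}^k ⟨A_i, B_i⟩_{2(1)}, where ⟨Δ, Δ'⟩_{2(k)} = Σ_{I ⊆ {1,...,k}} tr[(tr_I Δ)(tr_I Δ')] and tr_I denotes partial trace over the parties in I. -/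
/-!
The partial trace over `I` of a product tensor `⊗ᵢ Cᵢ` is `(∏_{i ∈ I} tr Cᵢ) • ⊗_{i ∉ I} Cᵢ`, and
the trace of a product of two product tensors is `∏ᵢ tr (Cᵢ Dᵢ)`. Hence the `I`-th summand is
`∏_{i ∈ I} tr Aᵢ tr Bᵢ * ∏_{i ∉ I} tr (Aᵢ Bᵢ)`, and the sum over all `I` is the expansion of
`∏ᵢ (tr (Aᵢ Bᵢ) + tr Aᵢ tr Bᵢ)`.
-/

open Matrix BigOperators

variable {ι : Type*} [Fintype ι] {κ : ι → Type*}

theorem Fintype.prod_apply_dite_mem [DecidableEq ι] {M : Type*} [CommMonoid M] (I : Finset ι)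
    (f : ∀ i, κ i → κ i → M) (z : ∀ i : {j // j ∈ I}, κ i) (x y : ∀ i : {j // j ∉ I}, κ i) :
    ∏ i, f i (if h : i ∈ I then z ⟨i, h⟩ else x ⟨i, h⟩)
        (if h : i ∈ I then z ⟨i, h⟩ else y ⟨i, h⟩) =
      (∏ i : {j // j ∈ I}, f i (z i) (z i)) * ∏ i : {j // j ∉ I}, f i (x i) (y i) := by
  rw [← Fintype.prod_subtype_mul_prod_subtype (M := M) (· ∈ I)]
  -- `convert` reconciles two different (but subsingleton-equal) `Fintype` instances on the subtypes
  congr 1 <;> refine Finset.prod_congr (by convert rfl) fun i _ => ?_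
  · rw [dif_pos i.2, dif_pos i.2]
  · rw [dif_neg i.2, dif_neg i.2]

namespace Matrix

variable {R : Type*} [CommSemiring R]

def piKronecker (C : ∀ i, Matrix (κ i) (κ i) R) : Matrix (∀ i, κ i) (∀ i, κ i) R :=
  fun x y => ∏ i, C i (x i) (y i)

variable [DecidableEq ι] [∀ i, Fintype (κ i)]

def partialTrace (I : Finset ι) (Δ : Matrix (∀ i, κ i) (∀ i, κ i) R) :
    Matrix (∀ i : {j // j ∉ I}, κ i) (∀ i : {j // j ∉ I}, κ i) R :=
  fun x y => ∑ z : ∀ i : {j // j ∈ I}, κ i,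
    Δ (fun i => if h : i ∈ I then z ⟨i, h⟩ else x ⟨i, h⟩)
      (fun i => if h : i ∈ I then z ⟨i, h⟩ else y ⟨i, h⟩)

theorem trace_piKronecker (C : ∀ i, Matrix (κ i) (κ i) R) :
    trace (piKronecker C) = ∏ i, trace (C i) := by
  simp only [trace, diag, piKronecker, Fintype.prod_sum]

theorem piKronecker_mul_piKronecker (C D : ∀ i, Matrix (κ i) (κ i) R) :
    piKronecker C * piKronecker D = piKronecker fun i => C i * D i := by
  ext x y
  simp only [piKronecker, mul_apply, ← Finset.prod_mul_distrib, Fintype.prod_sum]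

theorem trace_piKronecker_mul_piKronecker (C D : ∀ i, Matrix (κ i) (κ i) R) :
    trace (piKronecker C * piKronecker D) = ∏ i, trace (C i * D i) := by
  rw [piKronecker_mul_piKronecker, trace_piKronecker]

theorem partialTrace_piKronecker (I : Finset ι) (C : ∀ i, Matrix (κ i) (κ i) R) :
    partialTrace I (piKronecker C) =
      (∏ i ∈ I, trace (C i)) • piKronecker fun i : {j // j ∉ I} => C i := by
  ext x y
  simp only [partialTrace, piKronecker, smul_apply, smul_eq_mul]
  rw [Finset.sum_congr rfl fun z _ => Fintype.prod_apply_dite_mem I (fun i => C i) z x y,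
    ← Finset.sum_mul, ← Fintype.prod_sum fun (i : {j // j ∈ I}) a => C i a a,
    ← Finset.prod_coe_sort I]
  rfl

theorem trace_partialTrace_mul_partialTrace (I : Finset ι) (C D : ∀ i, Matrix (κ i) (κ i) R) :
    trace (partialTrace I (piKronecker C) * partialTrace I (piKronecker D)) =
      (∏ i ∈ I, trace (C i) * trace (D i)) * ∏ i ∈ Iᶜ, trace (C i * D i) := by
  rw [partialTrace_piKronecker, partialTrace_piKronecker, smul_mul_smul_comm, trace_smul,
    trace_piKronecker_mul_piKronecker, smul_eq_mul, Finset.prod_mul_distrib,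
    Finset.prod_subtype Iᶜ (p := (· ∉ I)) fun _ => Finset.mem_compl]

theorem sum_trace_partialTrace_mul_partialTrace (C D : ∀ i, Matrix (κ i) (κ i) R) :
    ∑ I : Finset ι, trace (partialTrace I (piKronecker C) * partialTrace I (piKronecker D)) =
      ∏ i, (trace (C i * D i) + trace (C i) * trace (D i)) := by
  simp only [trace_partialTrace_mul_partialTrace, add_comm (trace (_ * _)), Fintype.prod_add]

end Matrix

theorem stmt8_general (k : ℕ) (d : Fin k → ℕ)
    (A B : ∀ i, Matrix (Fin (d i)) (Fin (d i)) ℂ)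
    (tensor : (∀ i, Matrix (Fin (d i)) (Fin (d i)) ℂ) →
      Matrix (∀ i, Fin (d i)) (∀ i, Fin (d i)) ℂ)
    (htensor : ∀ C x y, tensor C x y = ∏ i, C i (x i) (y i))
    (ptr : (I : Finset (Fin k)) → Matrix (∀ i, Fin (d i)) (∀ i, Fin (d i)) ℂ →
      Matrix (∀ i : {j // j ∉ I}, Fin (d i)) (∀ i : {j // j ∉ I}, Fin (d i)) ℂ)
    (hptr : ∀ I Δ x y, ptr I Δ x y =
      ∑ z : ∀ i : {j : Fin k // j ∈ I}, Fin (d i),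
        Δ (fun i => if h : i ∈ I then z ⟨i, h⟩ else x ⟨i, h⟩)
          (fun i => if h : i ∈ I then z ⟨i, h⟩ else y ⟨i, h⟩)) :
    ∑ I : Finset (Fin k), Matrix.trace (ptr I (tensor A) * ptr I (tensor B)) =
      ∏ i, (Matrix.trace (A i * B i) + Matrix.trace (A i) * Matrix.trace (B i)) := by
  have tensor_eq : tensor = piKronecker := funext fun C => ext (htensor C)
  have ptr_eq : ptr = partialTrace := funext fun I => funext fun Δ => ext (hptr I Δ)
  rw [tensor_eq, ptr_eq, sum_trace_partialTrace_mul_partialTrace]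

/-- The inner product `⟨A,B⟩_{2(1)} = tr(AB) + (tr A)(tr B)` tensorizes: for Hermitian
`A i, B i` on `ℂ^{d i}`, the quantity `⟨⊗ᵢ Aᵢ, ⊗ᵢ Bᵢ⟩_{2(k)} = ∑_{I ⊆ {1..k}} tr[(tr_I ⊗A)(tr_I ⊗B)]`
equals `∏ᵢ (tr(AᵢBᵢ) + tr Aᵢ tr Bᵢ)`, where `tr_I` is the partial trace over the factors in `I`. -/
theorem stmt8 (k : ℕ) (d : Fin k → ℕ)
    (A B : ∀ i, Matrix (Fin (d i)) (Fin (d i)) ℂ)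
    (hA : ∀ i, (A i).IsHermitian) (hB : ∀ i, (B i).IsHermitian)
    (tensor : (∀ i, Matrix (Fin (d i)) (Fin (d i)) ℂ) →
      Matrix (∀ i, Fin (d i)) (∀ i, Fin (d i)) ℂ)
    (htensor : ∀ C x y, tensor C x y = ∏ i, C i (x i) (y i))
    (ptr : (I : Finset (Fin k)) → Matrix (∀ i, Fin (d i)) (∀ i, Fin (d i)) ℂ →
      Matrix (∀ i : {j // j ∉ I}, Fin (d i)) (∀ i : {j // j ∉ I}, Fin (d i)) ℂ)
    (hptr : ∀ I Δ x y, ptr I Δ x y =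
      ∑ z : ∀ i : {j : Fin k // j ∈ I}, Fin (d i),
        Δ (fun i => if h : i ∈ I then z ⟨i, h⟩ else x ⟨i, h⟩)
          (fun i => if h : i ∈ I then z ⟨i, h⟩ else y ⟨i, h⟩)) :
    ∑ I : Finset (Fin k), Matrix.trace (ptr I (tensor A) * ptr I (tensor B)) =
      ∏ i, (Matrix.trace (A i * B i) + Matrix.trace (A i) * Matrix.trace (B i)) :=
  stmt8_general k d A B tensor htensor ptr hptr
end

section
/- Let M, M' be discrete POVMs on C^{d₁} with (1−ε)‖Δ‖_M ≤ ‖Δ‖_{M'} ≤ (1+ε)‖Δ‖_M for all Hermitian Δ on C^{d₁}, and let N, N' be discrete POVMs on C^{d₂} with the analogous two-sided bounds. Then for all Hermitian Δ on C^{d₁} ⊗ C^{d₂}: (1−ε)²‖Δ‖_{M⊗N} ≤ ‖Δ‖_{M'⊗N'} ≤ (1+ε)²‖Δ‖_{M⊗N}, where M⊗N denotes the POVM (M_i ⊗ N_j) and ‖Δ‖_{M⊗N} = Σ_{i,j}|tr(Δ (M_i ⊗ N_j))|. -/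
open Matrix BigOperators Kronecker
open scoped ComplexOrder

/-! Contracting one tensor factor of `Δ` against `N_j` turns `∑ᵢ |tr(Δ (Mᵢ ⊗ N_j))|` into
`‖Δ̃_j‖_M` for a Hermitian matrix `Δ̃_j` on the first factor, so the hypothesis on `M, M'` can be
applied for each `j` separately; doing the same in the other factor and chaining the two
comparisons gives the squared constants. -/

section Contraction

variable {α β R : Type*} [CommRing R]

/-- `contractSnd Δ N = tr₂ (Δ (1 ⊗ N))`. -/
def contractSnd [Fintype β] (Δ : Matrix (α × β) (α × β) R) (N : Matrix β β R) : Matrix α α R :=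
  Matrix.of fun k l => ∑ a, ∑ b, Δ (k, a) (l, b) * N b a

/-- `contractFst Δ M = tr₁ (Δ (M ⊗ 1))`. -/
def contractFst [Fintype α] (Δ : Matrix (α × β) (α × β) R) (M : Matrix α α R) : Matrix β β R :=
  Matrix.of fun a b => ∑ k, ∑ l, Δ (k, a) (l, b) * M l k

theorem trace_mul_kronecker_eq_trace_contractSnd_mul [Fintype α] [Fintype β]
    (Δ : Matrix (α × β) (α × β) R) (M : Matrix α α R) (N : Matrix β β R) :
    trace (Δ * (M ⊗ₖ N)) = trace (contractSnd Δ N * M) := by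
  simp only [trace, diag, mul_apply, kroneckerMap_apply, contractSnd, of_apply,
    Fintype.sum_prod_type, Finset.sum_mul]
  refine Finset.sum_congr rfl fun k _ => ?_
  rw [Finset.sum_comm]
  exact Finset.sum_congr rfl fun l _ => Finset.sum_congr rfl fun a _ =>
    Finset.sum_congr rfl fun b _ => by ring

theorem trace_mul_kronecker_eq_trace_contractFst_mul [Fintype α] [Fintype β]
    (Δ : Matrix (α × β) (α × β) R) (M : Matrix α α R) (N : Matrix β β R) :
    trace (Δ * (M ⊗ₖ N)) = trace (contractFst Δ M * N) := by
  simp only [trace, diag, mul_apply, kroneckerMap_apply, contractFst, of_apply,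
    Fintype.sum_prod_type, Finset.sum_mul]
  rw [Finset.sum_comm]
  refine Finset.sum_congr rfl fun a _ => ?_
  calc ∑ k, ∑ l, ∑ b, Δ (k, a) (l, b) * (M l k * N b a)
      = ∑ k, ∑ b, ∑ l, Δ (k, a) (l, b) * (M l k * N b a) :=
        Finset.sum_congr rfl fun k _ => Finset.sum_comm
    _ = ∑ b, ∑ k, ∑ l, Δ (k, a) (l, b) * (M l k * N b a) := Finset.sum_comm
    _ = ∑ b, ∑ k, ∑ l, Δ (k, a) (l, b) * M l k * N b a :=
        Finset.sum_congr rfl fun b _ => Finset.sum_congr rfl fun k _ =>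
          Finset.sum_congr rfl fun l _ => by ring

theorem Matrix.IsHermitian.contractSnd [Fintype β] [StarRing R]
    {Δ : Matrix (α × β) (α × β) R} {N : Matrix β β R}
    (hΔ : Δ.IsHermitian) (hN : N.IsHermitian) : (contractSnd Δ N).IsHermitian := by
  ext k l
  simp only [conjTranspose_apply, _root_.contractSnd, of_apply, star_sum, star_mul']
  rw [Finset.sum_comm]
  refine Finset.sum_congr rfl fun a _ => Finset.sum_congr rfl fun b _ => ?_
  rw [← conjTranspose_apply Δ, hΔ.eq, ← conjTranspose_apply N, hN.eq]

theorem Matrix.IsHermitian.contractFst [Fintype α] [StarRing R]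
    {Δ : Matrix (α × β) (α × β) R} {M : Matrix α α R}
    (hΔ : Δ.IsHermitian) (hM : M.IsHermitian) : (contractFst Δ M).IsHermitian := by
  ext a b
  simp only [conjTranspose_apply, _root_.contractFst, of_apply, star_sum, star_mul']
  rw [Finset.sum_comm]
  refine Finset.sum_congr rfl fun k _ => Finset.sum_congr rfl fun l _ => ?_
  rw [← conjTranspose_apply Δ, hΔ.eq, ← conjTranspose_apply M, hM.eq]

end Contraction

section MeasurementNorm

variable {α β ι κ ι' κ' : Type*} [Fintype α] [Fintype β]
  [Fintype ι] [Fintype κ] [Fintype ι'] [Fintype κ']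

/-- `‖Δ‖_M`. -/
noncomputable def measNorm (M : ι → Matrix α α ℂ) (Δ : Matrix α α ℂ) : ℝ :=
  ∑ i, |(trace (Δ * M i)).re|

/-- `‖Δ‖_{M ⊗ N}`. -/
noncomputable def kronMeasNorm (M : ι → Matrix α α ℂ) (N : κ → Matrix β β ℂ)
    (Δ : Matrix (α × β) (α × β) ℂ) : ℝ :=
  ∑ i, ∑ j, |(trace (Δ * (M i ⊗ₖ N j))).re|

theorem kronMeasNorm_eq_sum_measNorm_contractSnd (M : ι → Matrix α α ℂ)
    (N : κ → Matrix β β ℂ) (Δ : Matrix (α × β) (α × β) ℂ) :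
    kronMeasNorm M N Δ = ∑ j, measNorm M (contractSnd Δ (N j)) := by
  simp only [kronMeasNorm, measNorm, trace_mul_kronecker_eq_trace_contractSnd_mul]
  exact Finset.sum_comm

theorem kronMeasNorm_eq_sum_measNorm_contractFst (M : ι → Matrix α α ℂ)
    (N : κ → Matrix β β ℂ) (Δ : Matrix (α × β) (α × β) ℂ) :
    kronMeasNorm M N Δ = ∑ i, measNorm N (contractFst Δ (M i)) := by
  simp only [kronMeasNorm, measNorm, trace_mul_kronecker_eq_trace_contractFst_mul]

theorem kronMeasNorm_comparison_fst {M : ι → Matrix α α ℂ} {M' : ι' → Matrix α α ℂ}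
    {N : κ → Matrix β β ℂ} {c d : ℝ}
    (hMM' : ∀ Δ : Matrix α α ℂ, Δ.IsHermitian → c * measNorm M Δ ≤ d * measNorm M' Δ)
    (hN : ∀ j, (N j).IsHermitian) {Δ : Matrix (α × β) (α × β) ℂ} (hΔ : Δ.IsHermitian) :
    c * kronMeasNorm M N Δ ≤ d * kronMeasNorm M' N Δ := by
  simp only [kronMeasNorm_eq_sum_measNorm_contractSnd, Finset.mul_sum]
  exact Finset.sum_le_sum fun j _ => hMM' _ (hΔ.contractSnd (hN j))

theorem kronMeasNorm_comparison_snd {M : ι → Matrix α α ℂ}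
    {N : κ → Matrix β β ℂ} {N' : κ' → Matrix β β ℂ} {c d : ℝ}
    (hNN' : ∀ Δ : Matrix β β ℂ, Δ.IsHermitian → c * measNorm N Δ ≤ d * measNorm N' Δ)
    (hM : ∀ i, (M i).IsHermitian) {Δ : Matrix (α × β) (α × β) ℂ} (hΔ : Δ.IsHermitian) :
    c * kronMeasNorm M N Δ ≤ d * kronMeasNorm M N' Δ := by
  simp only [kronMeasNorm_eq_sum_measNorm_contractFst, Finset.mul_sum]
  exact Finset.sum_le_sum fun i _ => hNN' _ (hΔ.contractFst (hM i))

end MeasurementNorm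

theorem stmt14_general (d₁ d₂ : ℕ) (ε : ℝ) (hε0 : 0 < ε) (hε1 : ε < 1)
    (m m' n n' : ℕ)
    (M : Fin m → Matrix (Fin d₁) (Fin d₁) ℂ) (M' : Fin m' → Matrix (Fin d₁) (Fin d₁) ℂ)
    (N : Fin n → Matrix (Fin d₂) (Fin d₂) ℂ) (N' : Fin n' → Matrix (Fin d₂) (Fin d₂) ℂ)
    (hM : ∀ i, (M i).PosSemidef)
    (hN' : ∀ j, (N' j).PosSemidef)
    (hMapprox : ∀ Δ : Matrix (Fin d₁) (Fin d₁) ℂ, Δ.IsHermitian →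
      (1 - ε) * ∑ i, |(Matrix.trace (Δ * M i)).re| ≤ ∑ i, |(Matrix.trace (Δ * M' i)).re| ∧
      ∑ i, |(Matrix.trace (Δ * M' i)).re| ≤ (1 + ε) * ∑ i, |(Matrix.trace (Δ * M i)).re|)
    (hNapprox : ∀ Δ : Matrix (Fin d₂) (Fin d₂) ℂ, Δ.IsHermitian →
      (1 - ε) * ∑ j, |(Matrix.trace (Δ * N j)).re| ≤ ∑ j, |(Matrix.trace (Δ * N' j)).re| ∧
      ∑ j, |(Matrix.trace (Δ * N' j)).re| ≤ (1 + ε) * ∑ j, |(Matrix.trace (Δ * N j)).re|) :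
    ∀ Δ : Matrix (Fin d₁ × Fin d₂) (Fin d₁ × Fin d₂) ℂ, Δ.IsHermitian →
      (1 - ε) ^ 2 * ∑ i, ∑ j, |(Matrix.trace (Δ * (M i ⊗ₖ N j))).re|
          ≤ ∑ i, ∑ j, |(Matrix.trace (Δ * (M' i ⊗ₖ N' j))).re| ∧
      ∑ i, ∑ j, |(Matrix.trace (Δ * (M' i ⊗ₖ N' j))).re|
          ≤ (1 + ε) ^ 2 * ∑ i, ∑ j, |(Matrix.trace (Δ * (M i ⊗ₖ N j))).re| := by
  intro Δ hΔ
  have hM_herm i := (hM i).isHermitian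
  have hN'_herm j := (hN' j).isHermitian
  have lowerM := kronMeasNorm_comparison_fst (c := 1 - ε) (d := 1)
    (fun Δ hΔ => by simpa [measNorm] using (hMapprox Δ hΔ).1) hN'_herm hΔ
  have upperM := kronMeasNorm_comparison_fst (c := 1) (d := 1 + ε)
    (fun Δ hΔ => by simpa [measNorm] using (hMapprox Δ hΔ).2) hN'_herm hΔ
  have lowerN := kronMeasNorm_comparison_snd (c := 1 - ε) (d := 1)
    (fun Δ hΔ => by simpa [measNorm] using (hNapprox Δ hΔ).1) hM_herm hΔ
  have upperN := kronMeasNorm_comparison_snd (c := 1) (d := 1 + ε)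
    (fun Δ hΔ => by simpa [measNorm] using (hNapprox Δ hΔ).2) hM_herm hΔ
  simp only [one_mul] at lowerM upperM lowerN upperN
  change (1 - ε) ^ 2 * kronMeasNorm M N Δ ≤ kronMeasNorm M' N' Δ ∧
    kronMeasNorm M' N' Δ ≤ (1 + ε) ^ 2 * kronMeasNorm M N Δ
  constructor
  · calc (1 - ε) ^ 2 * kronMeasNorm M N Δ
          = (1 - ε) * ((1 - ε) * kronMeasNorm M N Δ) := by ring
      _ ≤ (1 - ε) * kronMeasNorm M N' Δ := by gcongr
      _ ≤ kronMeasNorm M' N' Δ := lowerM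
  · calc kronMeasNorm M' N' Δ ≤ (1 + ε) * kronMeasNorm M N' Δ := upperM
      _ ≤ (1 + ε) * ((1 + ε) * kronMeasNorm M N Δ) := by gcongr
      _ = (1 + ε) ^ 2 * kronMeasNorm M N Δ := by ring

/-- If POVM `M'` ε-approximates `M` on `ℂ^{d₁}` and `N'` ε-approximates `N` on `ℂ^{d₂}`
(in the sense of distinguishability norms), then `M' ⊗ N'` (1±ε)²-approximates
`M ⊗ N` on `ℂ^{d₁} ⊗ ℂ^{d₂}`. -/
theorem stmt14 (d₁ d₂ : ℕ) (ε : ℝ) (hε0 : 0 < ε) (hε1 : ε < 1)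
    (m m' n n' : ℕ)
    (M : Fin m → Matrix (Fin d₁) (Fin d₁) ℂ) (M' : Fin m' → Matrix (Fin d₁) (Fin d₁) ℂ)
    (N : Fin n → Matrix (Fin d₂) (Fin d₂) ℂ) (N' : Fin n' → Matrix (Fin d₂) (Fin d₂) ℂ)
    (hM : ∀ i, (M i).PosSemidef) (hMsum : ∑ i, M i = 1)
    (hM' : ∀ i, (M' i).PosSemidef) (hM'sum : ∑ i, M' i = 1)
    (hN : ∀ j, (N j).PosSemidef) (hNsum : ∑ j, N j = 1)
    (hN' : ∀ j, (N' j).PosSemidef) (hN'sum : ∑ j, N' j = 1)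
    (hMapprox : ∀ Δ : Matrix (Fin d₁) (Fin d₁) ℂ, Δ.IsHermitian →
      (1 - ε) * ∑ i, |(Matrix.trace (Δ * M i)).re| ≤ ∑ i, |(Matrix.trace (Δ * M' i)).re| ∧
      ∑ i, |(Matrix.trace (Δ * M' i)).re| ≤ (1 + ε) * ∑ i, |(Matrix.trace (Δ * M i)).re|)
    (hNapprox : ∀ Δ : Matrix (Fin d₂) (Fin d₂) ℂ, Δ.IsHermitian →
      (1 - ε) * ∑ j, |(Matrix.trace (Δ * N j)).re| ≤ ∑ j, |(Matrix.trace (Δ * N' j)).re| ∧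
      ∑ j, |(Matrix.trace (Δ * N' j)).re| ≤ (1 + ε) * ∑ j, |(Matrix.trace (Δ * N j)).re|) :
    ∀ Δ : Matrix (Fin d₁ × Fin d₂) (Fin d₁ × Fin d₂) ℂ, Δ.IsHermitian →
      (1 - ε) ^ 2 * ∑ i, ∑ j, |(Matrix.trace (Δ * (M i ⊗ₖ N j))).re|
          ≤ ∑ i, ∑ j, |(Matrix.trace (Δ * (M' i ⊗ₖ N' j))).re| ∧
      ∑ i, ∑ j, |(Matrix.trace (Δ * (M' i ⊗ₖ N' j))).re|
          ≤ (1 + ε) ^ 2 * ∑ i, ∑ j, |(Matrix.trace (Δ * (M i ⊗ₖ N j))).re| :=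
  stmt14_general d₁ d₂ ε hε0 hε1 m m' n n' M M' N N' hM hN' hMapprox hNapprox
end
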